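/- Energy conservation of the free 3D pendulum: suppose J ∈ ℝ³ˣ³ is symmetric, R : ℝ → ℝ³ˣ³ and Ω : ℝ → ℝ³ are differentiable, R(t) ∈ SO(3) for all t, and with Π(t) = J Ω(t) they satisfy Ṙ(t) = R(t) S(Ω(t)) and Π̇(t) = −Ω(t) × Π(t) + m g ρ × (R(t)ᵀ e₃) for all t. Then the total energy E(t) = ½ Ω(t)ᵀ J Ω(t) − m g e₃ᵀ (R(t) ρ) is constant. -/

import Mathlib

open Matrix
open scoped Matrix

attribute [local instance] Matrix.normedAddCommGroup Matrix.normedSpace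

/-- The hat map `S : ℝ³ → 𝔰𝔬(3)`, defined by `S(x) y = x × y`. -/
def hat (x : Fin 3 → ℝ) : Matrix (Fin 3) (Fin 3) ℝ :=
  !![0, -x 2, x 1; x 2, 0, -x 0; -x 1, x 0, 0]

/-- The gravity direction `e₃ = (0,0,1)`. -/
def e3 : Fin 3 → ℝ := ![0, 0, 1]

section Calculus

variable {𝕜 : Type*} [NontriviallyNormedField 𝕜] {m n : Type*} [Fintype n] {t : 𝕜}

theorem HasDerivAt.dotProduct {f g : 𝕜 → n → 𝕜} {f' g' : n → 𝕜}
    (hf : HasDerivAt f f' t) (hg : HasDerivAt g g' t) :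
    HasDerivAt (fun s => f s ⬝ᵥ g s) (f' ⬝ᵥ g t + f t ⬝ᵥ g') t := by
  simp only [_root_.dotProduct, ← Finset.sum_add_distrib]
  exact HasDerivAt.fun_sum fun i _ => (hasDerivAt_pi.1 hf i).mul (hasDerivAt_pi.1 hg i)

theorem HasDerivAt.mulVec {M : 𝕜 → Matrix m n 𝕜} {M' : Matrix m n 𝕜} {v : 𝕜 → n → 𝕜}
    {v' : n → 𝕜} (hM : HasDerivAt M M' t) (hv : HasDerivAt v v' t) :
    HasDerivAt (fun s => M s *ᵥ v s) (M' *ᵥ v t + M t *ᵥ v') t :=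
  hasDerivAt_pi.2 fun i => (hasDerivAt_pi.1 hM i).dotProduct hv

theorem HasDerivAt.dotProduct_mulVec_self {J : Matrix n n 𝕜} (hJ : Jᵀ = J) {v : 𝕜 → n → 𝕜}
    {v' : n → 𝕜} (hv : HasDerivAt v v' t) :
    HasDerivAt (fun s => v s ⬝ᵥ (J *ᵥ v s)) (2 * (v t ⬝ᵥ (J *ᵥ v'))) t := by
  refine (hv.dotProduct ((hasDerivAt_const t J).mulVec hv)).congr_deriv ?_
  rw [zero_mulVec, zero_add, dotProduct_mulVec v', ← mulVec_transpose, hJ, dotProduct_comm,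
    two_mul]

end Calculus

theorem hat_mulVec (x y : Fin 3 → ℝ) : hat x *ᵥ y = x ⨯₃ y := by
  ext i
  fin_cases i <;> simp [hat, crossProduct, mulVec, dotProduct, Fin.sum_univ_three] <;> ring

theorem dotProduct_mul_hat_mulVec (v ω ρ : Fin 3 → ℝ) (R : Matrix (Fin 3) (Fin 3) ℝ) :
    v ⬝ᵥ ((R * hat ω) *ᵥ ρ) = ω ⬝ᵥ (ρ ⨯₃ (Rᵀ *ᵥ v)) := by
  rw [← mulVec_mulVec, hat_mulVec, dotProduct_mulVec, ← mulVec_transpose, dotProduct_comm]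
  exact (dotProduct_comm _ _).trans (triple_product_permutation _ _ _)

noncomputable def pendulumEnergy (m g : ℝ) (ρ : Fin 3 → ℝ) (J R : Matrix (Fin 3) (Fin 3) ℝ)
    (ω : Fin 3 → ℝ) : ℝ :=
  1 / 2 * (ω ⬝ᵥ (J *ᵥ ω)) - m * g * (e3 ⬝ᵥ (R *ᵥ ρ))

/-- Both energies change at the rate `m g ⟨Ω, ρ × Rᵀ e₃⟩`, the power of gravity; the gyroscopic
term `Ω × J Ω` does no work. -/
theorem hasDerivAt_pendulumEnergy {m g : ℝ} {ρ : Fin 3 → ℝ} {J : Matrix (Fin 3) (Fin 3) ℝ}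
    (hJ : Jᵀ = J) {R : ℝ → Matrix (Fin 3) (Fin 3) ℝ} {Ω : ℝ → Fin 3 → ℝ} {t : ℝ}
    (hΩ : DifferentiableAt ℝ Ω t) (hR : HasDerivAt R (R t * hat (Ω t)) t)
    (hP : HasDerivAt (fun s => J *ᵥ Ω s)
      (-(Ω t ⨯₃ (J *ᵥ Ω t)) + (m * g) • (ρ ⨯₃ ((R t)ᵀ *ᵥ e3))) t) :
    HasDerivAt (fun s => pendulumEnergy m g ρ J (R s) (Ω s)) 0 t := by
  have hJΩ' : J *ᵥ deriv Ω t = -(Ω t ⨯₃ (J *ᵥ Ω t)) + (m * g) • (ρ ⨯₃ ((R t)ᵀ *ᵥ e3)) := by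
    simpa using ((hasDerivAt_const t J).mulVec hΩ.hasDerivAt).unique hP
  have hkin := hΩ.hasDerivAt.dotProduct_mulVec_self hJ
  have hpot := (hasDerivAt_const t e3).dotProduct (hR.mulVec (hasDerivAt_const t ρ))
  refine ((hkin.const_mul (1 / 2 : ℝ)).sub (hpot.const_mul (m * g))).congr_deriv ?_
  rw [hJΩ', dotProduct_add, dotProduct_neg, dot_self_cross, dotProduct_smul, mulVec_zero, add_zero,
    zero_dotProduct, zero_add, dotProduct_mul_hat_mulVec]
  simp only [smul_eq_mul]
  ring

theorem free_pendulum_energy_conserved_general (m g : ℝ) (ρ : Fin 3 → ℝ)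
    (J : Matrix (Fin 3) (Fin 3) ℝ) (hJ : Jᵀ = J)
    (R : ℝ → Matrix (Fin 3) (Fin 3) ℝ) (Ω : ℝ → Fin 3 → ℝ)
    (hΩ : Differentiable ℝ Ω)
    (hR : ∀ t, HasDerivAt R (R t * hat (Ω t)) t)
    (hP : ∀ t, HasDerivAt (fun s => J *ᵥ Ω s)
      (-(Ω t ⨯₃ (J *ᵥ Ω t)) + (m * g) • (ρ ⨯₃ ((R t)ᵀ *ᵥ e3))) t) :
    ∀ t s : ℝ,
      (1 : ℝ) / 2 * (Ω t ⬝ᵥ (J *ᵥ Ω t)) - m * g * (e3 ⬝ᵥ (R t *ᵥ ρ)) =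
      (1 : ℝ) / 2 * (Ω s ⬝ᵥ (J *ᵥ Ω s)) - m * g * (e3 ⬝ᵥ (R s *ᵥ ρ)) := by
  have hE t := hasDerivAt_pendulumEnergy hJ (hΩ t) (hR t) (hP t)
  exact is_const_of_deriv_eq_zero (fun t => (hE t).differentiableAt) (fun t => (hE t).deriv)

/-- Energy conservation of the free 3D pendulum: if `J` is symmetric, `R(t) ∈ SO(3)`,
`Ṙ = R S(Ω)` and, with `Π = J Ω`, `Π̇ = −Ω × Π + m g ρ × (Rᵀ e₃)`, then the total energy
`E = ½ Ωᵀ J Ω − m g e₃ᵀ (R ρ)` is constant. -/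
theorem free_pendulum_energy_conserved (m g : ℝ) (ρ : Fin 3 → ℝ)
    (J : Matrix (Fin 3) (Fin 3) ℝ) (hJ : Jᵀ = J)
    (R : ℝ → Matrix (Fin 3) (Fin 3) ℝ) (Ω : ℝ → Fin 3 → ℝ)
    (hSO : ∀ t, (R t)ᵀ * R t = 1 ∧ (R t).det = 1)
    (hΩ : Differentiable ℝ Ω)
    (hR : ∀ t, HasDerivAt R (R t * hat (Ω t)) t)
    (hP : ∀ t, HasDerivAt (fun s => J *ᵥ Ω s)
      (-(Ω t ⨯₃ (J *ᵥ Ω t)) + (m * g) • (ρ ⨯₃ ((R t)ᵀ *ᵥ e3))) t) :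
    ∀ t s : ℝ,
      (1 : ℝ) / 2 * (Ω t ⬝ᵥ (J *ᵥ Ω t)) - m * g * (e3 ⬝ᵥ (R t *ᵥ ρ)) =
      (1 : ℝ) / 2 * (Ω s ⬝ᵥ (J *ᵥ Ω s)) - m * g * (e3 ⬝ᵥ (R s *ᵥ ρ)) :=
  free_pendulum_energy_conserved_general m g ρ J hJ R Ω hΩ hR hP
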